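/- arXiv:1602.03864 — 3 statements merged into one kernel-verified Lean document; each statement's English description precedes it below -/
import Mathlib

section
/- Let L > 0 be real, N ≥ 2 an integer, m ≥ 1 an integer, and λ = m²·π²/L². Then the real vector space V(λ) of λ-eigenfunction systems (with the differential equation imposed on all of ℝ) on the equilateral N-star of edge length L has dimension 1. -/
open Real Finset

/-- Membership in the space `V(λ)` of `λ`-eigenfunction systems on the equilateral
`N`-star of edge length `L`, with the differential equation `f'' = -λ f` imposed
on all of `ℝ`: `C²` functions, continuity at the central vertex, Kirchhoff condition
at the central vertex, Neumann (standard) conditions at the boundary vertices. -/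
def MemStarEigenspace (N : ℕ) (L lam : ℝ) (f : Fin N → ℝ → ℝ) : Prop :=
  (∀ i, ContDiff ℝ 2 (f i)) ∧
  (∀ i, ∀ x : ℝ, deriv (deriv (f i)) x = -lam * f i x) ∧
  (∀ i j, f i 0 = f j 0) ∧
  (∑ i, deriv (f i) 0 = 0) ∧
  (∀ i, deriv (f i) L = 0)

/-!
On each edge `f'' = -k ^ 2 f` with `k = m π / L`. The Neumann condition at the boundary vertex,
together with `sin (k L) = 0`, pins each `f i` down to a multiple of `cos (k x)` by uniqueness for
this ODE (conserved energy `f' ^ 2 + k ^ 2 f ^ 2`); continuity at the centre makes the multiples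
equal.
-/

theorem hasDerivAt_cos_mul (k x : ℝ) :
    HasDerivAt (fun x => cos (k * x)) (-(k * sin (k * x))) x := by
  simpa [mul_comm] using ((hasDerivAt_id x).const_mul k).cos

theorem hasDerivAt_sin_mul (k x : ℝ) :
    HasDerivAt (fun x => sin (k * x)) (k * cos (k * x)) x := by
  simpa [mul_comm] using ((hasDerivAt_id x).const_mul k).sin

theorem deriv_cos_mul (k : ℝ) :
    deriv (fun x => cos (k * x)) = fun x => -(k * sin (k * x)) :=
  funext fun x => (hasDerivAt_cos_mul k x).deriv

theorem deriv_deriv_cos_mul (k x : ℝ) :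
    deriv (deriv fun x => cos (k * x)) x = -k ^ 2 * cos (k * x) := by
  have h : HasDerivAt (fun x => -(k * sin (k * x))) (-(k * (k * cos (k * x)))) x :=
    ((hasDerivAt_sin_mul k x).const_mul k).neg
  rw [deriv_cos_mul, h.deriv]
  ring

/-- The energy `g' ^ 2 + k ^ 2 g ^ 2` is conserved, so it vanishes identically once it vanishes
at one point; this forces `g' = 0`, hence `g` is constant. -/
theorem eq_zero_of_hasDerivAt_neg_sq_mul {g g' : ℝ → ℝ} {k a : ℝ}
    (hg : ∀ x, HasDerivAt g (g' x) x) (hg' : ∀ x, HasDerivAt g' (-k ^ 2 * g x) x)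
    (ha : g a = 0) (ha' : g' a = 0) : g = 0 := by
  set E : ℝ → ℝ := fun x => g' x ^ 2 + k ^ 2 * g x ^ 2
  have hE : ∀ x, HasDerivAt E 0 x := fun x =>
    (((hg' x).pow 2).add (((hg x).pow 2).const_mul (k ^ 2))).congr_deriv (by push_cast; ring)
  have hE_zero : ∀ x, E x = 0 := fun x => by
    rw [is_const_of_deriv_eq_zero (fun y => (hE y).differentiableAt) (fun y => (hE y).deriv) x a]
    simp [E, ha, ha']
  have hg'_zero : ∀ x, deriv g x = 0 := fun x => by
    have := hE_zero x
    rw [(hg x).deriv]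
    nlinarith [sq_nonneg (g' x), sq_nonneg (k * g x)]
  funext x
  rw [is_const_of_deriv_eq_zero (fun y => (hg y).differentiableAt) hg'_zero x a, ha,
    Pi.zero_apply]

/-- Comparing `f` with `f L cos (k L) cos (k x)`, which has the same value and slope at `L`
because `cos (k L) ^ 2 = 1`. -/
theorem eq_mul_cos_of_deriv_eq_zero {f : ℝ → ℝ} {k L : ℝ} (hf : ContDiff ℝ 2 f)
    (hode : ∀ x, deriv (deriv f) x = -k ^ 2 * f x) (hL : deriv f L = 0)
    (hsin : sin (k * L) = 0) (x : ℝ) : f x = f 0 * cos (k * x) := by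
  set c := f L * cos (k * L)
  have hf₁ : ∀ x, HasDerivAt f (deriv f x) x := fun x =>
    (hf.differentiable (by norm_num) x).hasDerivAt
  have hf₂ : ∀ x, HasDerivAt (deriv f) (-k ^ 2 * f x) x := fun x =>
    hode x ▸ (hf.differentiable_deriv_two x).hasDerivAt
  have hdiff : (fun x => f x - c * cos (k * x)) = 0 := by
    refine eq_zero_of_hasDerivAt_neg_sq_mul (g' := fun x => deriv f x + c * (k * sin (k * x)))
      (k := k) (a := L) (fun x => ?_) (fun x => ?_) ?_ ?_
    · exact ((hf₁ x).sub ((hasDerivAt_cos_mul k x).const_mul c)).congr_deriv (by ring)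
    · exact ((hf₂ x).add (((hasDerivAt_sin_mul k x).const_mul k).const_mul c)).congr_deriv
        (by ring)
    · linear_combination f L * sin (k * L) * hsin - f L * sin_sq_add_cos_sq (k * L)
    · simp [hL, hsin]
  have hf_eq : ∀ x, f x = c * cos (k * x) := fun x => sub_eq_zero.mp (congrFun hdiff x)
  rw [hf_eq x, hf_eq 0, mul_zero, cos_zero, mul_one]

theorem memStarEigenspace_cos {N : ℕ} {k L : ℝ} (hsin : sin (k * L) = 0) :
    MemStarEigenspace N L (k ^ 2) fun _ x => cos (k * x) :=
  ⟨fun _ => by fun_prop, fun _ x => deriv_deriv_cos_mul k x, fun _ _ => rfl,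
    by simp [deriv_cos_mul], fun _ => by simp [deriv_cos_mul, hsin]⟩

theorem MemStarEigenspace.eq_smul_cos {N : ℕ} {k L : ℝ} {f : Fin N → ℝ → ℝ}
    (hf : MemStarEigenspace N L (k ^ 2) f) (hsin : sin (k * L) = 0) (i₀ : Fin N) :
    f = f i₀ 0 • fun _ x => cos (k * x) := by
  obtain ⟨hC2, hode, hcont, -, hneu⟩ := hf
  funext i x
  rw [eq_mul_cos_of_deriv_eq_zero (hC2 i) (hode i) (hneu i) hsin x, hcont i i₀]
  rfl

theorem star_eigenspace_dim_integer_general (N : ℕ) (hN : 2 ≤ N) (L : ℝ)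
    (m : ℕ) (lam : ℝ) (hlam : lam = (m : ℝ) ^ 2 * Real.pi ^ 2 / L ^ 2) :
    ∃ b : Fin 1 → (Fin N → ℝ → ℝ),
      (∀ k, MemStarEigenspace N L lam (b k)) ∧
      LinearIndependent ℝ b ∧
      ∀ f : Fin N → ℝ → ℝ, MemStarEigenspace N L lam f →
        f ∈ Submodule.span ℝ (Set.range b) := by
  let i₀ : Fin N := ⟨0, by omega⟩
  set k := m * π / L
  have hsin : sin (k * L) = 0 := by
    rcases eq_or_ne L 0 with rfl | hL
    · simp
    · rw [div_mul_cancel₀ _ hL, sin_nat_mul_pi]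
  obtain rfl : lam = k ^ 2 := by rw [hlam, div_pow, mul_pow]
  refine ⟨fun _ _ x => cos (k * x), fun _ => memStarEigenspace_cos hsin, ?_, fun f hf => ?_⟩
  · rw [linearIndependent_unique_iff]
    intro h
    simpa using congrFun (congrFun h i₀) 0
  · rw [Set.range_unique, Submodule.mem_span_singleton]
    exact ⟨_, (hf.eq_smul_cos hsin i₀).symm⟩

/-- For `L > 0`, `N ≥ 2`, an integer `m ≥ 1` and `λ = m² π² / L²`, the space `V(λ)` of
`λ`-eigenfunction systems on the equilateral `N`-star of edge length `L` has
dimension `1`: there is a linearly independent one-element family in `V(λ)`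
spanning all of `V(λ)`. -/
theorem star_eigenspace_dim_integer (N : ℕ) (hN : 2 ≤ N) (L : ℝ) (hL : 0 < L)
    (m : ℕ) (hm : 1 ≤ m) (lam : ℝ) (hlam : lam = (m : ℝ) ^ 2 * Real.pi ^ 2 / L ^ 2) :
    ∃ b : Fin 1 → (Fin N → ℝ → ℝ),
      (∀ k, MemStarEigenspace N L lam (b k)) ∧
      LinearIndependent ℝ b ∧
      ∀ f : Fin N → ℝ → ℝ, MemStarEigenspace N L lam f →
        f ∈ Submodule.span ℝ (Set.range b) :=
  star_eigenspace_dim_integer_general N hN L m lam hlam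
end

section
/- For every even integer n ≥ 2 there exists exactly one real number λ in the open interval (0, 1) satisfying the equation cos(√λ·π/n)·sin(√λ·π) + 2·sin(√λ·π/n)·cos(√λ·π) = 0. -/
set_option maxHeartbeats 1000000
open Real

/-- For every even integer `n ≥ 2` the secular equation
`cos(√λ π/n) sin(√λ π) + 2 sin(√λ π/n) cos(√λ π) = 0` has exactly one solution `λ`
in the open interval `(0, 1)`. -/
theorem secular_equation_unique_root (n : ℕ) (hn : 2 ≤ n) (hne : Even n) :
    ∃! lam : ℝ, lam ∈ Set.Ioo (0 : ℝ) 1 ∧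
      Real.cos (Real.sqrt lam * (Real.pi / n)) * Real.sin (Real.sqrt lam * Real.pi)
        + 2 * Real.sin (Real.sqrt lam * (Real.pi / n))
          * Real.cos (Real.sqrt lam * Real.pi) = 0 := by
  have hn2 : (2:ℝ) ≤ (n:ℝ) := by exact_mod_cast hn
  have hnpos : (0:ℝ) < n := by linarith
  have hpin : 0 < π / n := div_pos pi_pos hnpos
  have hpin2 : π / n ≤ π / 2 := by
    apply div_le_div_of_nonneg_left pi_pos.le (by norm_num) hn2
  set g : ℝ → ℝ := fun t => Real.cos (t * (π / n)) * Real.sin (t * π)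
      + 2 * Real.sin (t * (π / n)) * Real.cos (t * π) with hg
  -- positivity on (0, 1/2]
  have hpos : ∀ t : ℝ, 0 < t → t ≤ 1/2 → 0 < g t := by
    intro t ht ht2
    have h1 : 0 < t * π := mul_pos ht pi_pos
    have h2 : t * π ≤ π / 2 := by nlinarith [pi_pos]
    have h3 : 0 < t * (π / n) := mul_pos ht hpin
    have h4 : t * (π / n) < π / 2 := by nlinarith
    have hsb : 0 < Real.sin (t * π) := sin_pos_of_pos_of_lt_pi h1 (by linarith [pi_pos])
    have hca : 0 < Real.cos (t * (π / n)) := cos_pos_of_mem_Ioo ⟨by linarith, h4⟩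
    have hsa : 0 < Real.sin (t * (π / n)) := sin_pos_of_pos_of_lt_pi h3 (by linarith [pi_pos])
    have hcb : 0 ≤ Real.cos (t * π) := cos_nonneg_of_mem_Icc ⟨by linarith, h2⟩
    have : 0 < Real.cos (t * (π / n)) * Real.sin (t * π) := mul_pos hca hsb
    simp only [hg]
    nlinarith
  -- basic facts for t ∈ (1/2, 1)
  have hfacts : ∀ t : ℝ, 1/2 < t → t < 1 →
      0 < Real.cos (t * (π / n)) ∧ Real.cos (t * π) < 0 := by
    intro t ht1 ht2
    constructor
    · apply cos_pos_of_mem_Ioo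
      constructor
      · nlinarith [hpin]
      · nlinarith [hpin, pi_pos]
    · apply cos_neg_of_pi_div_two_lt_of_lt
      · nlinarith [pi_pos]
      · nlinarith [pi_pos]
  -- the auxiliary strictly monotone function
  set φ : ℝ → ℝ := fun t => Real.tan (t * π - π) + 2 * Real.tan (t * (π / n)) with hφ
  have hmono : StrictMonoOn φ (Set.Ioo (1/2 : ℝ) 1) := by
    have m1 : StrictMonoOn (fun t : ℝ => Real.tan (t * π - π)) (Set.Ioo (1/2 : ℝ) 1) := by
      intro a ha b hb hab
      apply Real.strictMonoOn_tan
      · constructor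
        · simp only [Set.mem_Ioo] at ha; nlinarith [pi_pos, ha.1]
        · simp only [Set.mem_Ioo] at ha; nlinarith [pi_pos, ha.2]
      · constructor
        · simp only [Set.mem_Ioo] at hb; nlinarith [pi_pos, hb.1]
        · simp only [Set.mem_Ioo] at hb; nlinarith [pi_pos, hb.2]
      · nlinarith [pi_pos]
    have m2 : StrictMonoOn (fun t : ℝ => 2 * Real.tan (t * (π / n))) (Set.Ioo (1/2 : ℝ) 1) := by
      intro a ha b hb hab
      simp only [Set.mem_Ioo] at ha hb
      have : Real.tan (a * (π / n)) < Real.tan (b * (π / n)) := by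
        apply Real.strictMonoOn_tan
        · constructor
          · nlinarith [ha.1]
          · nlinarith [ha.2]
        · constructor
          · nlinarith [hb.1]
          · nlinarith [hb.2]
        · nlinarith
      linarith
    exact m1.add m2
  -- on (1/2,1): g t = 0 ↔ φ t = 0
  have hiff : ∀ t : ℝ, 1/2 < t → t < 1 → (g t = 0 ↔ φ t = 0) := by
    intro t ht1 ht2
    obtain ⟨hca, hcb⟩ := hfacts t ht1 ht2
    have hcb' : Real.cos (t * π) ≠ 0 := ne_of_lt hcb
    have hca' : Real.cos (t * (π / n)) ≠ 0 := ne_of_gt hca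
    have key : g t = Real.cos (t * (π / n)) * Real.cos (t * π) * φ t := by
      have e1 : Real.sin (t * π) / Real.cos (t * π) * Real.cos (t * π) = Real.sin (t * π) :=
        div_mul_cancel₀ _ hcb'
      have e2 : Real.sin (t * (π / n)) / Real.cos (t * (π / n)) * Real.cos (t * (π / n))
          = Real.sin (t * (π / n)) := div_mul_cancel₀ _ hca'
      simp only [hg, hφ, Real.tan_sub_pi]
      simp only [Real.tan_eq_sin_div_cos]
      linear_combination (-Real.cos (t * (π / n))) * e1 + (-2 * Real.cos (t * π)) * e2
    rw [key]
    constructor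
    · intro h
      rcases mul_eq_zero.mp h with h' | h'
      · exact absurd h' (mul_ne_zero hca' hcb')
      · exact h'
    · intro h; rw [h, mul_zero]
  -- existence of a root of g via IVT
  have hcont : ContinuousOn g (Set.Icc (1/2 : ℝ) 1) := by fun_prop
  have hg1 : g 1 < 0 := by
    have : Real.sin (π / n) > 0 := sin_pos_of_pos_of_lt_pi hpin (by linarith [pi_pos])
    simp only [hg, one_mul, Real.sin_pi, Real.cos_pi]
    nlinarith
  have hghalf : 0 < g (1/2 : ℝ) := hpos _ (by norm_num) le_rfl
  obtain ⟨t₀, ht₀mem, ht₀⟩ : ∃ t₀ ∈ Set.Ioo (1/2 : ℝ) 1, g t₀ = 0 := by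
    have := intermediate_value_Ioo' (by norm_num : (1/2:ℝ) ≤ 1) hcont
    have h0 : (0:ℝ) ∈ Set.Ioo (g 1) (g (1/2)) := ⟨hg1, hghalf⟩
    obtain ⟨t₀, ht₀mem, ht₀⟩ := this h0
    exact ⟨t₀, ht₀mem, ht₀⟩
  obtain ⟨ht₀1, ht₀2⟩ := ht₀mem
  -- helper: from lam root produce t ∈ (1/2,1) with properties
  have key : ∀ lam : ℝ, lam ∈ Set.Ioo (0:ℝ) 1 →
      Real.cos (Real.sqrt lam * (π / n)) * Real.sin (Real.sqrt lam * π)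
        + 2 * Real.sin (Real.sqrt lam * (π / n)) * Real.cos (Real.sqrt lam * π) = 0 →
      Real.sqrt lam ∈ Set.Ioo (1/2 : ℝ) 1 ∧ g (Real.sqrt lam) = 0 := by
    intro lam hmem heq
    have hs0 : 0 < Real.sqrt lam := Real.sqrt_pos.mpr hmem.1
    have hs1 : Real.sqrt lam < 1 := by
      rw [show (1:ℝ) = Real.sqrt 1 by simp]
      exact Real.sqrt_lt_sqrt hmem.1.le hmem.2
    have hgz : g (Real.sqrt lam) = 0 := heq
    have hlt : 1/2 < Real.sqrt lam := by
      by_contra h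
      push_neg at h
      exact absurd hgz (ne_of_gt (hpos _ hs0 h))
    exact ⟨⟨hlt, hs1⟩, hgz⟩
  refine ⟨t₀^2, ⟨⟨by positivity, by nlinarith⟩, ?_⟩, ?_⟩
  · have hsq : Real.sqrt (t₀^2) = t₀ := Real.sqrt_sq (by linarith)
    rw [hsq]
    exact ht₀
  · intro lam ⟨hmem, heq⟩
    obtain ⟨hsmem, hgz⟩ := key lam hmem heq
    have hφz : φ (Real.sqrt lam) = 0 := (hiff _ hsmem.1 hsmem.2).mp hgz
    have hφz0 : φ t₀ = 0 := (hiff _ ht₀1 ht₀2).mp ht₀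
    have : Real.sqrt lam = t₀ :=
      hmono.injOn hsmem ⟨ht₀1, ht₀2⟩ (by rw [hφz, hφz0])
    calc lam = Real.sqrt lam ^ 2 := (Real.sq_sqrt hmem.1.le).symm
      _ = t₀ ^ 2 := by rw [this]
end

section
/- The unique root in (0, 1) of the secular equation tends to 1 as n → ∞ along even integers: for every ε > 0 there exists N ∈ ℕ such that for every even integer n ≥ N and every λ ∈ (0, 1) satisfying cos(√λ·π/n)·sin(√λ·π) + 2·sin(√λ·π/n)·cos(√λ·π) = 0, one has 1 − ε < λ < 1. -/
open Real

/-!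
Write `a = √λ π ∈ (0, π)`, so that the equation reads `cos (a/n) sin a + 2 sin (a/n) cos a = 0`.
The first term is at least `½ sin a ≥ a (π - a) / π²` (once `a/n ≤ π/3`) and the second is
at least `-2a/n`, so the left side is positive as soon as `n (π - a) > 2π²`. Hence if
`λ ≤ 1 - ε`, i.e. `π - a ≥ π (1 - √(1 - ε))`, no root exists for large `n`.
-/

theorem Real.two_mul_mul_pi_sub_div_pi_sq_le_sin {x : ℝ} (hx₀ : 0 ≤ x) (hxπ : x ≤ π) :
    2 * x * (π - x) / π ^ 2 ≤ sin x := by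
  have hπ := pi_pos
  rcases le_total x (π / 2) with hx | hx
  · calc 2 * x * (π - x) / π ^ 2 = 2 / π * x * ((π - x) / π) := by field_simp
      _ ≤ 2 / π * x * 1 := by gcongr; rw [div_le_one hπ]; linarith
      _ ≤ sin x := by simpa using mul_le_sin hx₀ hx
  · calc 2 * x * (π - x) / π ^ 2 = 2 / π * (π - x) * (x / π) := by field_simp
      _ ≤ 2 / π * (π - x) * 1 := by gcongr; rw [div_le_one hπ]; linarith
      _ ≤ sin x := by simpa using mul_le_sin (x := π - x) (by linarith) (by linarith)

theorem secular_pos {a n : ℝ} (ha₀ : 0 < a) (haπ : a < π) (hn : 2 * π ^ 2 < n * (π - a)) :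
    0 < cos (a / n) * sin a + 2 * sin (a / n) * cos a := by
  have hπ := pi_pos
  have hn₀ : 0 < n := by nlinarith
  have hn₃ : 3 ≤ n := by nlinarith [pi_gt_three]
  have ht₀ : 0 ≤ a / n := by positivity
  have ht : a / n ≤ π / 3 := by
    rw [div_le_div_iff₀ hn₀ (by norm_num)]; nlinarith
  have hcos_t : 1 / 2 ≤ cos (a / n) := by
    rw [← cos_pi_div_three]
    exact cos_le_cos_of_nonneg_of_le_pi ht₀ (by linarith) ht
  have hsin_t : sin (a / n) ≤ a / n := sin_le ht₀
  have hsin_t₀ : 0 ≤ sin (a / n) := sin_nonneg_of_nonneg_of_le_pi ht₀ (by linarith)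
  have hsin_a := two_mul_mul_pi_sub_div_pi_sq_le_sin ha₀.le haπ.le
  calc 0 < a / (n * π ^ 2) * (n * (π - a) - 2 * π ^ 2) := by
        have := sub_pos.2 hn; positivity
    _ = 1 / 2 * (2 * a * (π - a) / π ^ 2) - 2 * (a / n) := by field_simp
    _ ≤ cos (a / n) * sin a + 2 * sin (a / n) * cos a := by
        nlinarith [neg_one_le_cos a, sin_pos_of_pos_of_lt_pi ha₀ haπ]

/-- The root in `(0, 1)` of the secular equation
`cos(√λ π/n) sin(√λ π) + 2 sin(√λ π/n) cos(√λ π) = 0` tends to `1` as `n → ∞`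
along even integers. -/
theorem secular_root_tendsto_one :
    ∀ ε : ℝ, 0 < ε → ∃ N : ℕ, ∀ n : ℕ, Even n → N ≤ n →
      ∀ lam ∈ Set.Ioo (0 : ℝ) 1,
        Real.cos (Real.sqrt lam * (Real.pi / n)) * Real.sin (Real.sqrt lam * Real.pi)
          + 2 * Real.sin (Real.sqrt lam * (Real.pi / n))
            * Real.cos (Real.sqrt lam * Real.pi) = 0 →
        1 - ε < lam ∧ lam < 1 := by
  intro ε hε
  have hb : √(1 - ε) < 1 := (sqrt_lt' one_pos).2 (by linarith)
  obtain ⟨N, hN⟩ := exists_nat_gt (2 * π / (1 - √(1 - ε)))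
  refine ⟨N, fun n _ hNn lam hlam hroot => ⟨?_, hlam.2⟩⟩
  by_contra! hle
  have hs : √lam ≤ √(1 - ε) := sqrt_le_sqrt hle
  have hs₀ : 0 < √lam := sqrt_pos.2 hlam.1
  have hπ := pi_pos
  have hn : 2 * π < n * (1 - √(1 - ε)) :=
    (div_lt_iff₀ (sub_pos.2 hb)).1 (hN.trans_le (Nat.cast_le.2 hNn))
  refine (secular_pos (a := √lam * π) (n := n) (by positivity) (by nlinarith) ?_).ne' ?_
  · calc 2 * π ^ 2 < π * (n * (1 - √(1 - ε))) := by nlinarith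
      _ ≤ π * (n * (1 - √lam)) := by gcongr
      _ = n * (π - √lam * π) := by ring
  · simpa only [mul_div_assoc] using hroot
end
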